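/- arXiv:1604.07535 — 5 statements merged into one kernel-verified Lean document; each statement's English description precedes it below -/
import Mathlib

section
/- Let S be a finite set of lists of Booleans, each of length at most h, and let p be the cardinality of S. Then the set of all prefixes of members of S (a list t is a prefix of s if s = t ++ r for some list r; this includes the empty list when S is nonempty, and each member of S itself) has cardinality at most the sum over l = 0, 1, …, h of min(2^l, p). -/
/-!
Sort the prefixes by length. A prefix of length `l` is a word of length `l`, so there are at most
`2 ^ l` of them; it is also the truncation `s.take l` of some `s ∈ S`, so there are at most `|S|`
of them; and no prefix is longer than `h`.
-/

open Finset

namespace List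

variable {α : Type*} [DecidableEq α]

def prefixClosure (S : Finset (List α)) : Finset (List α) :=
  S.biUnion fun s => s.inits.toFinset

theorem mem_prefixClosure {S : Finset (List α)} {t : List α} :
    t ∈ prefixClosure S ↔ ∃ s ∈ S, t <+: s := by
  simp [prefixClosure, mem_inits]

theorem coe_prefixClosure (S : Finset (List α)) :
    (prefixClosure S : Set (List α)) = {t | ∃ s ∈ S, t <+: s} := by
  ext t
  exact mem_prefixClosure

theorem card_filter_length_eq_le_pow [Fintype α] (T : Finset (List α)) (l : ℕ) :
    #{t ∈ T | t.length = l} ≤ Fintype.card α ^ l :=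
  calc #{t ∈ T | t.length = l}
      ≤ #((Finset.univ : Finset (Vector α l)).image Vector.toList) :=
        Finset.card_le_card fun t ht => by
          simp only [Finset.mem_filter] at ht
          simpa using ⟨⟨t, ht.2⟩, rfl⟩
    _ ≤ Fintype.card (Vector α l) := Finset.card_image_le
    _ = Fintype.card α ^ l := card_vector l

theorem card_filter_length_eq_prefixClosure_le (S : Finset (List α)) (l : ℕ) :
    #{t ∈ prefixClosure S | t.length = l} ≤ #S :=
  calc #{t ∈ prefixClosure S | t.length = l}
      ≤ #(S.image (take l)) :=
        Finset.card_le_card fun t ht => by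
          obtain ⟨htS, rfl⟩ := Finset.mem_filter.1 ht
          obtain ⟨s, hs, hts⟩ := mem_prefixClosure.1 htS
          exact Finset.mem_image.2 ⟨s, hs, (prefix_iff_eq_take.1 hts).symm⟩
    _ ≤ #S := Finset.card_image_le

theorem card_prefixClosure_le [Fintype α] {S : Finset (List α)} {h : ℕ}
    (hlen : ∀ s ∈ S, s.length ≤ h) :
    #(prefixClosure S) ≤ ∑ l ∈ Finset.range (h + 1), min (Fintype.card α ^ l) #S := by
  have hmaps : ∀ t ∈ prefixClosure S, t.length ∈ Finset.range (h + 1) := fun t ht => by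
    obtain ⟨s, hs, hts⟩ := mem_prefixClosure.1 ht
    exact Finset.mem_range_succ_iff.2 (hts.length_le.trans (hlen s hs))
  rw [Finset.card_eq_sum_card_fiberwise hmaps]
  exact Finset.sum_le_sum fun l _ =>
    le_min (card_filter_length_eq_le_pow _ l) (card_filter_length_eq_prefixClosure_le S l)

end List

/-- Counting fact behind Lemma 5: identifying nodes of the complete binary tree
with lists of Booleans, the union of the root-to-node paths of `p = |S|` nodes,
each of depth at most `h`, i.e. the set of all prefixes of members of `S`,
has at most `∑_{l=0}^{h} min(2^l, p)` elements. -/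
theorem stmt_6 (S : Finset (List Bool)) (h : ℕ) (hlen : ∀ s ∈ S, s.length ≤ h)
    (p : ℕ) (hp : p = S.card) :
    Set.ncard {t : List Bool | ∃ s ∈ S, t <+: s} ≤
      ∑ l ∈ Finset.range (h + 1), min (2 ^ l) p := by
  subst hp
  rw [← List.coe_prefixClosure, Set.ncard_coe_finset]
  simpa using List.card_prefixClosure_le hlen
end

section
/- Let h and p be natural numbers with 1 ≤ p ≤ 2^h, and let k = ⌊log₂ p⌋ (i.e., k = Nat.log 2 p). Then the sum over l = 0, 1, …, h of min(2^l, p) is at most p·(h − k) + 2·p. -/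
/-!
Up to level `k = ⌊log₂ p⌋` the terms are bounded by `2 ^ l`, and this geometric sum is below
`2 ^ (k + 1) ≤ 2 * p`; each of the remaining `h - k` terms is at most `p`.
-/

open Finset

theorem sum_range_log_succ_min_two_pow_le (p : ℕ) :
    ∑ l ∈ range (Nat.log 2 p + 1), min (2 ^ l) p ≤ 2 * p := by
  rcases Nat.eq_zero_or_pos p with rfl | hp
  · simp
  calc ∑ l ∈ range (Nat.log 2 p + 1), min (2 ^ l) p
      ≤ ∑ l ∈ range (Nat.log 2 p + 1), 2 ^ l := sum_le_sum fun _ _ => min_le_left _ _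
    _ ≤ 2 ^ (Nat.log 2 p + 1) := (Nat.geomSum_lt le_rfl fun _ => mem_range.mp).le
    _ ≤ 2 * p := by
      rw [pow_succ']
      exact Nat.mul_le_mul_left 2 (Nat.pow_log_le_self 2 hp.ne')

theorem stmt_7_general (h p : ℕ) :
    ∑ l ∈ Finset.range (h + 1), min (2 ^ l) p ≤ p * (h - Nat.log 2 p) + 2 * p := by
  set k := Nat.log 2 p
  calc ∑ l ∈ range (h + 1), min (2 ^ l) p
      ≤ ∑ l ∈ range (k + 1 + (h - k)), min (2 ^ l) p :=
        sum_le_sum_of_subset (range_subset_range.mpr (by omega))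
    _ = ∑ l ∈ range (k + 1), min (2 ^ l) p + ∑ l ∈ range (h - k), min (2 ^ (k + 1 + l)) p :=
        sum_range_add _ _ _
    _ ≤ 2 * p + ∑ _l ∈ range (h - k), p :=
        add_le_add (sum_range_log_succ_min_two_pow_le p) (sum_le_sum fun _ _ => min_le_right _ _)
    _ = p * (h - k) + 2 * p := by rw [sum_const, card_range, smul_eq_mul]; ring

/-- Arithmetic bound completing Lemma 5: for `1 ≤ p ≤ 2^h` and
`k = ⌊log₂ p⌋`, one has `∑_{l=0}^{h} min(2^l, p) ≤ p·(h − k) + 2·p`. -/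
theorem stmt_7 (h p : ℕ) (hp1 : 1 ≤ p) (hp2 : p ≤ 2 ^ h) :
    ∑ l ∈ Finset.range (h + 1), min (2 ^ l) p ≤ p * (h - Nat.log 2 p) + 2 * p :=
  stmt_7_general h p
end

section
/- Let V be a nonempty finite set of real numbers and let w : ℝ → ℝ satisfy w(v) > 0 for every v ∈ V. Then the infimum over all real c of max_{v ∈ V} w(v)·|v − c| is attained at some c*, and there exist a, b ∈ V with a ≤ b such that this minimum value equals (b − a)·w(a)·w(b)/(w(a) + w(b)). -/
/-!
Any two sites `a ≤ b` force every center `c` to cost at least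
`(b - a)·w(a)·w(b)/(w(a) + w(b))`, because `w(a)|a - c|` and `w(b)|b - c|` cannot both be small
when `|a - c| + |b - c| ≥ b - a`. Conversely, for the pair maximizing this value, the point
splitting `[a, b]` in the ratio `w(b) : w(a)` costs exactly that much at `a` and `b`, and the
maximality of the pair bounds the cost at every other site by the same value.
-/

namespace OneCenter

variable {w : ℝ → ℝ}

noncomputable def pairValue (w : ℝ → ℝ) (a b : ℝ) : ℝ := (b - a) * w a * w b / (w a + w b)

noncomputable def weightedMidpoint (w : ℝ → ℝ) (a b : ℝ) : ℝ :=
  (w a * a + w b * b) / (w a + w b)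

@[simp]
lemma pairValue_self (a : ℝ) : pairValue w a a = 0 := by simp [pairValue]

lemma le_of_pairValue_nonneg {a b : ℝ} (ha : 0 < w a) (hb : 0 < w b)
    (h : 0 ≤ pairValue w a b) : a ≤ b := by
  rw [pairValue, le_div_iff₀ (by linarith), zero_mul, mul_assoc] at h
  exact sub_nonneg.mp (nonneg_of_mul_nonneg_left h (mul_pos ha hb))

lemma pairValue_le_of_cost_le {a b c m : ℝ} (ha : 0 < w a) (hb : 0 < w b)
    (hac : w a * |a - c| ≤ m) (hbc : w b * |b - c| ≤ m) : pairValue w a b ≤ m := by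
  have hdist : b - a ≤ |a - c| + |b - c| := by
    linarith [neg_abs_le (a - c), le_abs_self (b - c)]
  rw [pairValue, div_le_iff₀ (by linarith)]
  calc (b - a) * w a * w b ≤ (|a - c| + |b - c|) * (w a * w b) := by
        rw [mul_assoc]; gcongr
    _ = w a * |a - c| * w b + w b * |b - c| * w a := by ring
    _ ≤ m * w b + m * w a := by gcongr
    _ = m * (w a + w b) := by ring

lemma pairValue_le_sup' {V : Finset ℝ} (hV : V.Nonempty) (hw : ∀ v ∈ V, 0 < w v)
    {a b : ℝ} (ha : a ∈ V) (hb : b ∈ V) (c : ℝ) :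
    pairValue w a b ≤ V.sup' hV (fun v => w v * |v - c|) :=
  pairValue_le_of_cost_le (hw a ha) (hw b hb) (V.le_sup' (fun v => w v * |v - c|) ha)
    (V.le_sup' (fun v => w v * |v - c|) hb)

lemma mul_weightedMidpoint_sub_left {a b : ℝ} (h : w a + w b ≠ 0) :
    w a * (weightedMidpoint w a b - a) = pairValue w a b := by
  rw [weightedMidpoint, pairValue]
  field_simp
  ring

lemma mul_sub_weightedMidpoint_right {a b : ℝ} (h : w a + w b ≠ 0) :
    w b * (b - weightedMidpoint w a b) = pairValue w a b := by
  rw [weightedMidpoint, pairValue]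
  field_simp
  ring

lemma mul_weightedMidpoint_sub_le {a b v : ℝ} (ha : 0 < w a) (hb : 0 < w b) (hv : 0 < w v)
    (h : pairValue w v b ≤ pairValue w a b) :
    w v * (weightedMidpoint w a b - v) ≤ pairValue w a b := by
  have hbm := mul_sub_weightedMidpoint_right (w := w) (a := a) (b := b) (by linarith)
  rw [pairValue, div_le_iff₀ (by linarith)] at h
  -- `w v (m - v) w b = w v (b - v) w b - w v · w b (b - m)` and `w b (b - m)` is the pair value
  refine le_of_mul_le_mul_right ?_ hb
  nlinarith

lemma mul_sub_weightedMidpoint_le {a b v : ℝ} (ha : 0 < w a) (hb : 0 < w b) (hv : 0 < w v)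
    (h : pairValue w a v ≤ pairValue w a b) :
    w v * (v - weightedMidpoint w a b) ≤ pairValue w a b := by
  have ham := mul_weightedMidpoint_sub_left (w := w) (a := a) (b := b) (by linarith)
  rw [pairValue, div_le_iff₀ (by linarith)] at h
  refine le_of_mul_le_mul_right ?_ ha
  nlinarith

lemma cost_weightedMidpoint_le {a b v : ℝ} (ha : 0 < w a) (hb : 0 < w b) (hv : 0 < w v)
    (hva : pairValue w a v ≤ pairValue w a b) (hvb : pairValue w v b ≤ pairValue w a b) :
    w v * |v - weightedMidpoint w a b| ≤ pairValue w a b := by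
  rcases le_total v (weightedMidpoint w a b) with hle | hge
  · rw [abs_of_nonpos (sub_nonpos.mpr hle), neg_sub]
    exact mul_weightedMidpoint_sub_le ha hb hv hvb
  · rw [abs_of_nonneg (sub_nonneg.mpr hge)]
    exact mul_sub_weightedMidpoint_le ha hb hv hva

lemma sup'_cost_weightedMidpoint {V : Finset ℝ} (hV : V.Nonempty) (hw : ∀ v ∈ V, 0 < w v)
    {a b : ℝ} (ha : a ∈ V) (hb : b ∈ V)
    (hmax : ∀ x ∈ V, ∀ y ∈ V, pairValue w x y ≤ pairValue w a b) :
    V.sup' hV (fun v => w v * |v - weightedMidpoint w a b|) = pairValue w a b :=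
  le_antisymm
    (V.sup'_le hV _ fun v hv => cost_weightedMidpoint_le (hw a ha) (hw b hb) (hw v hv)
      (hmax a ha v hv) (hmax v hv b hb))
    (pairValue_le_sup' hV hw ha hb _)

end OneCenter

open OneCenter in
/-- One-center candidate-value principle on the real line (Kariv–Hakimi):
the minimum over center locations `c` of the largest weighted cost
`max_{v ∈ V} w(v)·|v − c|` is attained, and its value equals
`(b − a)·w(a)·w(b)/(w(a) + w(b))` for some `a ≤ b` in `V`. -/
theorem stmt_12 (V : Finset ℝ) (hV : V.Nonempty) (w : ℝ → ℝ)
    (hw : ∀ v ∈ V, 0 < w v) :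
    ∃ cstar : ℝ,
      (∀ c : ℝ, V.sup' hV (fun v => w v * |v - cstar|) ≤
        V.sup' hV (fun v => w v * |v - c|)) ∧
      ∃ a ∈ V, ∃ b ∈ V, a ≤ b ∧
        V.sup' hV (fun v => w v * |v - cstar|) = (b - a) * w a * w b / (w a + w b) := by
  obtain ⟨⟨a, b⟩, hab, hmax⟩ :=
    (V ×ˢ V).exists_max_image (fun p => pairValue w p.1 p.2) (hV.product hV)
  obtain ⟨ha, hb⟩ := Finset.mem_product.mp hab
  have hmax' : ∀ x ∈ V, ∀ y ∈ V, pairValue w x y ≤ pairValue w a b := fun x hx y hy =>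
    hmax (x, y) (Finset.mem_product.mpr ⟨hx, hy⟩)
  have hcost := sup'_cost_weightedMidpoint hV hw ha hb hmax'
  refine ⟨weightedMidpoint w a b, fun c => ?_, a, ha, b, hb, ?_, hcost⟩
  · rw [hcost]
    exact pairValue_le_sup' hV hw ha hb c
  · exact le_of_pairValue_nonneg (hw a ha) (hw b hb)
      (pairValue_self (w := w) a ▸ hmax' a ha a ha)
end

section
/- Let V be a nonempty finite set of real numbers, let w : ℝ → ℝ satisfy w(v) > 0 for every v ∈ V, and let p ≥ 1 be a natural number. Consider the objective G(C) = max_{v ∈ V} min_{c ∈ C} w(v)·|v − c| over nonempty finite sets C of reals with |C| ≤ p. Then the infimum of G over all such C is attained, and its value equals (b − a)·w(a)·w(b)/(w(a) + w(b)) for some a, b ∈ V with a ≤ b (the case a = b giving the value 0, which occurs in particular when p ≥ |V|). -/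
/-!
Call `μ` a feasible level if some set of at most `p` centers covers every `v ∈ V` within
weighted distance `μ`. Take a feasible level `β` and let `μ ≤ β` be the largest candidate value
`(b - a) w(a) w(b) / (w(a) + w(b))` not exceeding `β`. Two vertices served by a common center
at level `β` have candidate value at most `β`, hence at most `μ`, which says exactly that their
intervals `[v - μ / w(v), v + μ / w(v)]` meet. By Helly's theorem on the line all intervals of
such a cluster share a point, which becomes its new center, so `μ` is feasible too. Hence the
least feasible candidate value is the optimal cost, and it is attained.
-/

open Finset

noncomputable section

namespace WeightedPCenter

def candidateValue (w : ℝ → ℝ) (a b : ℝ) : ℝ := (b - a) * w a * w b / (w a + w b)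

def Covers (V : Finset ℝ) (w : ℝ → ℝ) (C : Finset ℝ) (β : ℝ) : Prop :=
  ∀ v ∈ V, ∃ c ∈ C, w v * |v - c| ≤ β

def cost (V : Finset ℝ) (hV : V.Nonempty) (w : ℝ → ℝ) (C : Finset ℝ) (hC : C.Nonempty) : ℝ :=
  V.sup' hV fun v => C.inf' hC fun c => w v * |v - c|

variable {V C : Finset ℝ} {w : ℝ → ℝ} {a b c β μ : ℝ}

@[simp]
theorem candidateValue_self : candidateValue w a a = 0 := by
  simp [candidateValue]

theorem candidateValue_le_of_abs_sub_le (ha : 0 < w a) (hb : 0 < w b)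
    (hac : w a * |a - c| ≤ β) (hbc : w b * |b - c| ≤ β) : candidateValue w a b ≤ β := by
  have hdist : b - a ≤ |a - c| + |b - c| := by
    linarith [le_abs_self (b - c), neg_abs_le (a - c)]
  rw [candidateValue, div_le_iff₀ (by positivity)]
  nlinarith [mul_le_mul_of_nonneg_right hdist (mul_pos ha hb).le]

theorem sub_div_le_add_div_of_candidateValue_le (ha : 0 < w a) (hb : 0 < w b)
    (h : candidateValue w a b ≤ μ) : b - μ / w b ≤ a + μ / w a := by
  rw [candidateValue, div_le_iff₀ (by positivity)] at h
  have key : (b - a) * (w a * w b) ≤ (μ / w b + μ / w a) * (w a * w b) := by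
    field_simp
    linarith
  nlinarith [le_of_mul_le_mul_right key (mul_pos ha hb)]

/-- Helly's theorem for intervals `[u - r u, u + r u]` of the real line. -/
theorem exists_forall_abs_sub_le {S : Finset ℝ} {r : ℝ → ℝ}
    (h : ∀ u ∈ S, ∀ v ∈ S, u - r u ≤ v + r v) : ∃ x, ∀ u ∈ S, |u - x| ≤ r u := by
  rcases S.eq_empty_or_nonempty with rfl | hS
  · simp
  refine ⟨S.sup' hS fun u => u - r u, fun u hu => abs_sub_le_iff.2 ⟨?_, ?_⟩⟩
  · linarith [le_sup' (fun u => u - r u) hu]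
  · linarith [sup'_le hS (fun u => u - r u) fun v hv => h v hv u hu]

theorem exists_center_of_cluster (hw : ∀ v ∈ V, 0 < w v) (hμ : 0 ≤ μ)
    (H : ∀ a ∈ V, ∀ b ∈ V, a ≤ b → candidateValue w a b ≤ β → candidateValue w a b ≤ μ)
    (c : ℝ) : ∃ x, ∀ u ∈ V, w u * |u - c| ≤ β → w u * |u - x| ≤ μ := by
  obtain ⟨x, hx⟩ := exists_forall_abs_sub_le
    (S := V.filter fun u => w u * |u - c| ≤ β) (r := fun u => μ / w u) <| by
      simp only [mem_filter]
      rintro u ⟨hu, huc⟩ v ⟨hv, hvc⟩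
      rcases le_total u v with huv | hvu
      · have := div_nonneg hμ (hw u hu).le
        have := div_nonneg hμ (hw v hv).le
        linarith
      · exact sub_div_le_add_div_of_candidateValue_le (hw v hv) (hw u hu)
          (H v hv u hu hvu (candidateValue_le_of_abs_sub_le (hw v hv) (hw u hu) hvc huc))
  refine ⟨x, fun u hu huc => ?_⟩
  have := hx u (mem_filter.2 ⟨hu, huc⟩)
  rwa [le_div_iff₀' (hw u hu)] at this

theorem Covers.exists_card_le_of_candidateValue (hw : ∀ v ∈ V, 0 < w v) (hμ : 0 ≤ μ)
    (H : ∀ a ∈ V, ∀ b ∈ V, a ≤ b → candidateValue w a b ≤ β → candidateValue w a b ≤ μ)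
    (hC : Covers V w C β) : ∃ C' : Finset ℝ, C'.card ≤ C.card ∧ Covers V w C' μ := by
  choose g hg using exists_center_of_cluster hw hμ H
  refine ⟨C.image g, card_image_le, fun v hv => ?_⟩
  obtain ⟨c, hc, hvc⟩ := hC v hv
  exact ⟨g c, mem_image_of_mem g hc, hg c v hv hvc⟩

theorem Covers.nonempty (hV : V.Nonempty) (hC : Covers V w C β) : C.Nonempty := by
  obtain ⟨v, hv⟩ := hV
  obtain ⟨c, hc, -⟩ := hC v hv
  exact ⟨c, hc⟩

theorem Covers.exists_candidateValue (hw : ∀ v ∈ V, 0 < w v) (hV : V.Nonempty)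
    (hC : Covers V w C β) : ∃ a ∈ V, ∃ b ∈ V, a ≤ b ∧ candidateValue w a b ≤ β ∧
      ∃ C' : Finset ℝ, C'.card ≤ C.card ∧ Covers V w C' (candidateValue w a b) := by
  classical
  obtain ⟨v₀, hv₀⟩ := hV
  have hβ : 0 ≤ β := by
    obtain ⟨c, -, hc⟩ := hC v₀ hv₀
    exact (mul_nonneg (hw v₀ hv₀).le (abs_nonneg _)).trans hc
  set Q := (V ×ˢ V).filter fun q => q.1 ≤ q.2 ∧ candidateValue w q.1 q.2 ≤ β
  have hv₀Q : (v₀, v₀) ∈ Q := by simp [Q, hv₀, hβ]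
  obtain ⟨⟨a, b⟩, habQ, hmax⟩ :=
    Q.exists_max_image (fun q => candidateValue w q.1 q.2) ⟨_, hv₀Q⟩
  obtain ⟨⟨ha, hb⟩, hab, habβ⟩ : (a ∈ V ∧ b ∈ V) ∧ a ≤ b ∧ candidateValue w a b ≤ β := by
    simpa [Q] using habQ
  have hμ : 0 ≤ candidateValue w a b := by simpa using hmax _ hv₀Q
  refine ⟨a, ha, b, hb, hab, habβ, hC.exists_card_le_of_candidateValue hw hμ ?_⟩
  intro a' ha' b' hb' hab' h
  exact hmax (a', b') (by simp [Q, ha', hb', hab', h])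

theorem cost_le_iff (hV : V.Nonempty) (hC : C.Nonempty) :
    cost V hV w C hC ≤ β ↔ Covers V w C β := by
  simp [cost, Covers, sup'_le_iff, inf'_le_iff]

theorem covers_cost (hV : V.Nonempty) (hC : C.Nonempty) : Covers V w C (cost V hV w C hC) :=
  (cost_le_iff hV hC).1 le_rfl

end WeightedPCenter

end

open WeightedPCenter in
/-- Candidate-value principle of Lemma 9 (Kariv–Hakimi) on the real line:
the optimal `p`-center cost
`min_{C, |C| ≤ p} max_{v ∈ V} min_{c ∈ C} w(v)·|v − c|` is attained, and its
value equals `(b − a)·w(a)·w(b)/(w(a) + w(b))` for some `a ≤ b` in `V`. -/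
theorem stmt_13 (V : Finset ℝ) (hV : V.Nonempty) (w : ℝ → ℝ)
    (hw : ∀ v ∈ V, 0 < w v) (p : ℕ) (hp : 1 ≤ p) :
    ∃ (C : Finset ℝ) (hC : C.Nonempty), C.card ≤ p ∧
      (∀ (C' : Finset ℝ) (hC' : C'.Nonempty), C'.card ≤ p →
        V.sup' hV (fun v => C.inf' hC fun c => w v * |v - c|) ≤
          V.sup' hV (fun v => C'.inf' hC' fun c => w v * |v - c|)) ∧
      ∃ a ∈ V, ∃ b ∈ V, a ≤ b ∧
        V.sup' hV (fun v => C.inf' hC fun c => w v * |v - c|)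
          = (b - a) * w a * w b / (w a + w b) := by
  classical
  set P := (V ×ˢ V).filter fun q =>
    q.1 ≤ q.2 ∧ ∃ C : Finset ℝ, C.card ≤ p ∧ Covers V w C (candidateValue w q.1 q.2)
  have feasible_le : ∀ (C' : Finset ℝ) (hC' : C'.Nonempty), C'.card ≤ p →
      ∃ q ∈ P, candidateValue w q.1 q.2 ≤ cost V hV w C' hC' := by
    intro C' hC' hC'p
    obtain ⟨a, ha, b, hb, hab, hle, C'', hC'', hcov⟩ :=
      (covers_cost hV hC').exists_candidateValue hw hV
    exact ⟨(a, b), mem_filter.2 ⟨mem_product.2 ⟨ha, hb⟩, hab, C'', hC''.trans hC'p, hcov⟩, hle⟩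
  obtain ⟨v₀, hv₀⟩ := id hV
  obtain ⟨q₀, hq₀, -⟩ := feasible_le {v₀} (singleton_nonempty v₀) (by simpa using hp)
  obtain ⟨⟨a, b⟩, habP, hmin⟩ := P.exists_min_image (fun q => candidateValue w q.1 q.2) ⟨_, hq₀⟩
  obtain ⟨habV, hab, C, hCp, hcov⟩ := mem_filter.1 habP
  obtain ⟨ha, hb⟩ := mem_product.1 habV
  have hC := hcov.nonempty hV
  have lower : ∀ (C' : Finset ℝ) (hC' : C'.Nonempty), C'.card ≤ p →
      candidateValue w a b ≤ cost V hV w C' hC' := by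
    intro C' hC' hC'p
    obtain ⟨q, hq, hle⟩ := feasible_le C' hC' hC'p
    exact (hmin q hq).trans hle
  have hopt : cost V hV w C hC = candidateValue w a b :=
    le_antisymm ((cost_le_iff hV hC).2 hcov) (lower C hC hCp)
  exact ⟨C, hC, hCp, fun C' hC' hC'p => hopt.le.trans (lower C' hC' hC'p), a, ha, b, hb, hab, hopt⟩
end

section
/- Let V be a finite set of real numbers, let w : ℝ → ℝ satisfy w(v) > 0 for every v ∈ V, let α ≥ 0, and let C be a nonempty finite set of reals such that for every v ∈ V there exists c ∈ C with w(v)·|v − c| ≤ α. Then there exists a function f : V → C such that w(v)·|v − f(v)| ≤ α for every v ∈ V, and every fiber of f is order-convex in V: if u, v ∈ V with f(u) = f(v) and x ∈ V satisfies u ≤ x ≤ v, then f(x) = f(u). Consequently V can be partitioned into at most |C| consecutive subsets, each α-covered by a single center of C. -/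
/-!
Assign every point to its nearest center, breaking ties towards the smaller center. By the
midpoint criterion this assignment is monotone, so each of its fibers is order-convex, and a
nearest center covers a point whenever any center does.
-/

namespace Finset

section NearestCenter

variable {K : Type*} [AddCommGroup K] [LinearOrder K]

theorem nearestCenters_nonempty {C : Finset K} (hC : C.Nonempty) (x : K) :
    (C.filter fun c => ∀ c' ∈ C, |x - c| ≤ |x - c'|).Nonempty := by
  obtain ⟨c, hc, hmin⟩ := C.exists_min_image (fun c => |x - c|) hC
  exact ⟨c, mem_filter.2 ⟨hc, hmin⟩⟩

def nearestCenter (C : Finset K) (hC : C.Nonempty) (x : K) : K :=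
  (C.filter fun c => ∀ c' ∈ C, |x - c| ≤ |x - c'|).min' (nearestCenters_nonempty hC x)

variable {C : Finset K} (hC : C.Nonempty)

theorem nearestCenter_mem_nearestCenters (x : K) :
    nearestCenter C hC x ∈ C.filter fun c => ∀ c' ∈ C, |x - c| ≤ |x - c'| :=
  min'_mem _ _

theorem nearestCenter_mem (x : K) : nearestCenter C hC x ∈ C :=
  (mem_filter.1 (nearestCenter_mem_nearestCenters hC x)).1

theorem abs_sub_nearestCenter_le (x : K) {c : K} (hc : c ∈ C) :
    |x - nearestCenter C hC x| ≤ |x - c| :=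
  (mem_filter.1 (nearestCenter_mem_nearestCenters hC x)).2 c hc

theorem nearestCenter_le_of_abs_sub_le {x c : K} (hc : c ∈ C)
    (h : |x - c| ≤ |x - nearestCenter C hC x|) : nearestCenter C hC x ≤ c :=
  min'_le _ _ <| mem_filter.2 ⟨hc, fun _ hc' => h.trans (abs_sub_nearestCenter_le hC x hc')⟩

end NearestCenter

section Monotone

variable {K : Type*} [CommRing K] [LinearOrder K] [IsStrictOrderedRing K]

theorem abs_sub_le_abs_sub_iff_of_lt {c d : K} (hdc : d < c) (t : K) :
    |t - d| ≤ |t - c| ↔ 2 * t ≤ d + c := by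
  rw [← sq_le_sq]
  constructor <;> intro h <;> nlinarith

theorem monotone_nearestCenter {C : Finset K} (hC : C.Nonempty) :
    Monotone (nearestCenter C hC) := by
  intro x y hxy
  by_contra! hlt
  set c := nearestCenter C hC x
  set d := nearestCenter C hC y
  have hy : 2 * y ≤ d + c :=
    (abs_sub_le_abs_sub_iff_of_lt hlt y).1 (abs_sub_nearestCenter_le hC y (nearestCenter_mem hC x))
  have hx : ¬ 2 * x ≤ d + c := fun h =>
    hlt.not_ge <| nearestCenter_le_of_abs_sub_le hC (nearestCenter_mem hC y)
      ((abs_sub_le_abs_sub_iff_of_lt hlt x).2 h)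
  exact hx (by linarith)

end Monotone

end Finset

open Finset in
theorem stmt_14_general (V C : Finset ℝ) (w : ℝ → ℝ) (hw : ∀ v ∈ V, 0 < w v)
    (α : ℝ) (hC : C.Nonempty)
    (hcov : ∀ v ∈ V, ∃ c ∈ C, w v * |v - c| ≤ α) :
    ∃ f : ℝ → ℝ,
      (∀ v ∈ V, f v ∈ C) ∧
      (∀ v ∈ V, w v * |v - f v| ≤ α) ∧
      (∀ u ∈ V, ∀ v ∈ V, ∀ x ∈ V, f u = f v → u ≤ x → x ≤ v → f x = f u) := by
  refine ⟨nearestCenter C hC, fun v _ => nearestCenter_mem hC v, fun v hv => ?_,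
    fun u _ v _ x _ huv hux hxv => ?_⟩
  · obtain ⟨c, hc, hcα⟩ := hcov v hv
    exact (mul_le_mul_of_nonneg_left (abs_sub_nearestCenter_le hC v hc) (hw v hv).le).trans hcα
  · exact le_antisymm ((monotone_nearestCenter hC hxv).trans_eq huv.symm)
      (monotone_nearestCenter hC hux)

/-- Path instance of Lemma 2: if a finite set `C` of centers α-covers the
finite vertex set `V ⊆ ℝ`, then each vertex can be assigned to a covering
center so that every fiber of the assignment is order-convex in `V`;
consequently `V` splits into at most `|C|` consecutive parts, each α-covered
by a single center. -/
theorem stmt_14 (V C : Finset ℝ) (w : ℝ → ℝ) (hw : ∀ v ∈ V, 0 < w v)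
    (α : ℝ) (hα : 0 ≤ α) (hC : C.Nonempty)
    (hcov : ∀ v ∈ V, ∃ c ∈ C, w v * |v - c| ≤ α) :
    ∃ f : ℝ → ℝ,
      (∀ v ∈ V, f v ∈ C) ∧
      (∀ v ∈ V, w v * |v - f v| ≤ α) ∧
      (∀ u ∈ V, ∀ v ∈ V, ∀ x ∈ V, f u = f v → u ≤ x → x ≤ v → f x = f u) :=
  stmt_14_general V C w hw α hC hcov
end
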